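/- Let T be a tagged component tree with ℓ ≥ 2 leaves, all of whose leaves have empty tag sets (clean). Then the minimum cost of a cover is ℓ + 1 if ℓ is odd and every leaf-branch of T contains at least two bad nodes (the fortress case), and ℓ otherwise. -/

import Mathlib

/-!
Every path of a cover contains at most two leaves, and a path through two leaves joins two
clean endpoints and costs `2`; hence a cover costs at least the number `ℓ` of leaves.
Conversely, pair the leaves (repeating one if `ℓ` is odd) so that the total length of the
paths joining the pairs is maximal. If some edge had no pair crossing it, swapping partners
between a pair on each side would lengthen the pairing; so every vertex is covered, at cost
`2` per pair. When `ℓ` is odd and some leaf `u` has a short branch, pair the other leaves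
instead: a bad vertex they miss would force the branch of `u` to be long, so adding the
trivial path at `u` gives a cover of cost `ℓ`.

In the fortress case a cover of cost `ℓ` would use every leaf exactly once and no path could
pay for anything but its leaves. As `ℓ` is odd, some path then contains a single bad vertex,
a leaf `u`; the second bad vertex of its branch lies on a path with two leaf ends,
which cannot enter the branch of `u` without reaching `u`.
-/

/-- The cost of a covering path in a tagged component tree: a *short* path (containing
at most one bad node) costs `1`; a *long* path (containing at least two bad nodes)
costs `1` if its two endpoints share a tag (*indel-saving*) and `2` otherwise
(*indel-neutral*). Tags are drawn from a two-element set, modelled by `Bool`. -/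
noncomputable def pathCost {V : Type} {G : SimpleGraph V} (bad : V → Prop)
    (tag : V → Finset Bool) {x y : V} (p : G.Walk x y) : ℕ :=
  if 2 ≤ {v | v ∈ p.support ∧ bad v}.ncard then
    (if ((tag x) ∩ (tag y)).Nonempty then 1 else 2)
  else 1

/-- The set of possible total costs of covers of a tagged component tree: a cover is a
finite family of paths such that every bad node lies on at least one of them. -/
noncomputable def CoverCosts {V : Type} (G : SimpleGraph V) (bad : V → Prop)
    (tag : V → Finset Bool) : Set ℕ :=
  {c | ∃ (k : ℕ) (x y : Fin k → V) (p : ∀ i, G.Walk (x i) (y i)),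
    (∀ i, (p i).IsPath) ∧ (∀ v, bad v → ∃ i, v ∈ (p i).support) ∧
    c = ∑ i, pathCost bad tag (p i)}

/-- The leaf-branch of the leaf `u` is *long* if it contains at least two bad nodes:
besides the (bad) leaf `u` itself, there is another bad node `v` reachable from `u`
along a path all of whose vertices other than `u` have degree 2. -/
def LongBranch {V : Type} [Fintype V] (G : SimpleGraph V) [DecidableRel G.Adj]
    (bad : V → Prop) (u : V) : Prop :=
  ∃ (v : V) (p : G.Walk u v), p.IsPath ∧ v ≠ u ∧ bad v ∧
    ∀ w ∈ p.support, w = u ∨ G.degree w = 2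

open Finset

namespace SimpleGraph

variable {V : Type} {G : SimpleGraph V}

namespace Walk

theorem IsPath.append_of_support_inter {u v w : V} {p : G.Walk u v} {q : G.Walk v w}
    (hp : p.IsPath) (hq : q.IsPath) (h : ∀ z ∈ p.support, z ∈ q.support → z = v) :
    (p.append q).IsPath := by
  have hq' := hq.support_nodup
  rw [← cons_tail_support q, List.nodup_cons] at hq'
  rw [isPath_def, support_append]
  refine hp.support_nodup.append hq'.2 fun z hzp hzq => ?_
  rw [h z hzp (List.mem_of_mem_tail hzq)] at hzq
  exact hq'.1 hzq

variable [Fintype V] [DecidableEq V] [DecidableRel G.Adj]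

theorem IsPath.exists_neighbors_mem_support {x y z : V} {p : G.Walk x y} (hp : p.IsPath)
    (hz : z ∈ p.support) (hzx : z ≠ x) (hzy : z ≠ y) :
    ∃ s : Finset V, #s = 2 ∧ s ⊆ G.neighborFinset z ∧ ∀ w ∈ s, w ∈ p.support := by
  obtain ⟨n, rfl, hn⟩ := mem_support_iff_exists_getVert.1 hz
  have h0 : n ≠ 0 := by rintro rfl; exact hzx p.getVert_zero
  have hl : n ≠ p.length := by rintro rfl; exact hzy p.getVert_length
  have hpred : G.Adj (p.getVert (n - 1)) (p.getVert n) := by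
    have := p.adj_getVert_succ (i := n - 1) (by omega)
    rwa [Nat.sub_add_cancel (by omega)] at this
  refine ⟨{p.getVert (n - 1), p.getVert (n + 1)}, card_pair fun h => ?_, ?_, ?_⟩
  · have := hp.getVert_injOn (by simp only [Set.mem_ofPred_eq]; omega)
      (by simp only [Set.mem_ofPred_eq]; omega) h
    omega
  · simp only [insert_subset_iff, singleton_subset_iff, mem_neighborFinset]
    exact ⟨hpred.symm, p.adj_getVert_succ (by omega)⟩
  · simp [getVert_mem_support]

theorem IsPath.two_le_degree {x y z : V} {p : G.Walk x y} (hp : p.IsPath) (hz : z ∈ p.support)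
    (hzx : z ≠ x) (hzy : z ≠ y) : 2 ≤ G.degree z := by
  obtain ⟨s, hs, hsub, -⟩ := hp.exists_neighbors_mem_support hz hzx hzy
  rw [← card_neighborFinset_eq_degree, ← hs]
  exact card_le_card hsub

theorem IsPath.eq_or_eq_of_degree_eq_one {x y z : V} {p : G.Walk x y} (hp : p.IsPath)
    (hz : z ∈ p.support) (hdeg : G.degree z = 1) : z = x ∨ z = y := by
  by_contra! h
  have := hp.two_le_degree hz h.1 h.2
  omega

theorem IsPath.mem_support_of_adj_of_degree_eq_two {x y z w : V} {p : G.Walk x y}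
    (hp : p.IsPath) (hz : z ∈ p.support) (hzx : z ≠ x) (hzy : z ≠ y) (hdeg : G.degree z = 2)
    (hzw : G.Adj z w) : w ∈ p.support := by
  obtain ⟨s, hs, hsub, hmem⟩ := hp.exists_neighbors_mem_support hz hzx hzy
  have : s = G.neighborFinset z :=
    eq_of_subset_of_card_le hsub (by rw [card_neighborFinset_eq_degree, hdeg, hs])
  exact hmem w (this ▸ (mem_neighborFinset ..).2 hzw)

theorem IsPath.mem_support_of_chain {x y u v : V} {p : G.Walk x y} (hp : p.IsPath)
    (hx : G.degree x ≠ 2) (hy : G.degree y ≠ 2) (r : G.Walk v u)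
    (hr : ∀ w ∈ r.support, w = u ∨ G.degree w = 2) (hv : v ∈ p.support) :
    u ∈ p.support := by
  induction r with
  | nil => exact hv
  | @cons a b c hab r ih =>
    rcases hr a (start_mem_support _) with rfl | ha
    · exact hv
    · refine ih (fun w hw => hr w (by simp [hw]))
        (hp.mem_support_of_adj_of_degree_eq_two hv ?_ ?_ ha hab)
      · rintro rfl; exact hx ha
      · rintro rfl; exact hy ha

end Walk

section Cost

variable {bad : V → Prop} {tag : V → Finset Bool}

theorem one_le_pathCost {x y : V} (p : G.Walk x y) : 1 ≤ pathCost bad tag p := by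
  unfold pathCost
  split_ifs <;> omega

theorem pathCost_le_two {x y : V} (p : G.Walk x y) : pathCost bad tag p ≤ 2 := by
  unfold pathCost
  split_ifs <;> omega

theorem pathCost_nil (u : V) : pathCost bad tag (Walk.nil : G.Walk u u) = 1 := by
  rw [pathCost, if_neg]
  have : {v | v ∈ (Walk.nil : G.Walk u u).support ∧ bad v}.ncard ≤ 1 :=
    (Set.ncard_le_one ((List.finite_toSet _).subset fun _ h => h.1)).2
      fun a ha b hb => by simp_all
  omega

theorem pathCost_eq_two {x y v w : V} {p : G.Walk x y} (hv : v ∈ p.support)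
    (hw : w ∈ p.support) (hvw : v ≠ w) (hbv : bad v) (hbw : bad w)
    (htag : tag x = ∅ ∨ tag y = ∅) : pathCost bad tag p = 2 := by
  have h2 : 1 < {z | z ∈ p.support ∧ bad z}.ncard :=
    (Set.one_lt_ncard_iff ((List.finite_toSet _).subset fun _ h => h.1)).2
      ⟨v, w, ⟨hv, hbv⟩, ⟨hw, hbw⟩, hvw⟩
  rw [pathCost, if_pos (show 2 ≤ _ from h2), if_neg]
  rcases htag with h | h <;> simp [h]

end Cost

namespace IsTree

noncomputable def path (hT : G.IsTree) (u v : V) : G.Walk u v :=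
  (hT.existsUnique_path u v).exists.choose

theorem isPath_path (hT : G.IsTree) (u v : V) : (hT.path u v).IsPath :=
  (hT.existsUnique_path u v).exists.choose_spec

theorem eq_path (hT : G.IsTree) {u v : V} {p : G.Walk u v} (hp : p.IsPath) :
    p = hT.path u v :=
  (hT.existsUnique_path u v).unique hp (hT.isPath_path u v)

theorem path_self (hT : G.IsTree) (u : V) : hT.path u u = Walk.nil :=
  (hT.eq_path Walk.IsPath.nil).symm

theorem length_path (hT : G.IsTree) (u v : V) : (hT.path u v).length = G.dist u v := by
  obtain ⟨p, hp, hl⟩ := hT.connected.exists_path_of_dist u v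
  rw [← hT.eq_path hp, hl]

theorem mem_support_path_comm (hT : G.IsTree) {u v z : V} (h : z ∈ (hT.path u v).support) :
    z ∈ (hT.path v u).support := by
  rwa [← hT.eq_path (hT.isPath_path u v).reverse, Walk.support_reverse, List.mem_reverse]

theorem dist_add_dist_of_mem_support_path [DecidableEq V] (hT : G.IsTree) {u v z : V}
    (h : z ∈ (hT.path u v).support) : G.dist u z + G.dist z v = G.dist u v := by
  have := congrArg Walk.length ((hT.path u v).take_spec h)
  rw [Walk.length_append, hT.eq_path ((hT.isPath_path u v).takeUntil h),
    hT.eq_path ((hT.isPath_path u v).dropUntil h)] at this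
  simpa only [length_path] using this

theorem mem_support_path_of_dist_add_dist (hT : G.IsTree) {u v z : V}
    (h : G.dist u z + G.dist z v = G.dist u v) : z ∈ (hT.path u v).support := by
  have hw := ((hT.path u z).append (hT.path z v)).isPath_of_length_eq_dist
    (by rw [Walk.length_append, length_path, length_path, h])
  rw [← hT.eq_path hw, Walk.mem_support_append_iff]
  exact Or.inl (Walk.end_mem_support _)

theorem eq_penultimate_of_dist_eq (hT : G.IsTree) {p x c : V} (hxc : G.Adj x c)
    (h : G.dist p x = G.dist p c + 1) : c = (hT.path p x).penultimate :=
  hT.isAcyclic.eq_penultimate_of_adj_end (hT.isPath_path p x) hxc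
    (hT.mem_support_path_of_dist_add_dist (by rw [dist_eq_one_iff_adj.2 hxc.symm]; omega))

end IsTree

/-- For an edge `ab` of a tree, `G.Nearer a b x` says that `x` lies on the side of `a`, i.e.
in the component of `a` once the edge is deleted. -/
def Nearer (G : SimpleGraph V) (a b x : V) : Prop := G.dist x b = G.dist x a + 1

theorem Nearer.not_nearer {a b x : V} (h : G.Nearer a b x) : ¬ G.Nearer b a x := by
  unfold Nearer at *
  omega

theorem nearer_self {a b : V} (hab : G.Adj a b) : G.Nearer a b a := by
  rw [Nearer, dist_self, dist_eq_one_iff_adj.2 hab]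

namespace IsTree

theorem nearer_or (hT : G.IsTree) {a b : V} (hab : G.Adj a b) (x : V) :
    G.Nearer a b x ∨ G.Nearer b a x :=
  (hT.dist_eq_dist_add_one_of_adj x hab).symm

variable [DecidableEq V]

theorem nearer_of_mem_support_path (hT : G.IsTree) {a b z t : V} (hab : G.Adj a b)
    (hz : G.Nearer a b z) (ht : t ∈ (hT.path z a).support) : G.Nearer a b t := by
  have h1 := hT.dist_add_dist_of_mem_support_path ht
  have h2 : G.dist z b ≤ G.dist z t + G.dist t b := hT.connected.dist_triangle
  refine (hT.nearer_or hab t).resolve_right fun h => ?_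
  unfold Nearer at *
  omega

theorem dist_eq_of_nearer (hT : G.IsTree) {a b x y : V} (hab : G.Adj a b)
    (hx : G.Nearer a b x) (hy : G.Nearer b a y) :
    G.dist x y = G.dist x a + 1 + G.dist b y := by
  have hb : ∀ z ∈ (hT.path b y).support, G.Nearer b a z := fun z hz =>
    hT.nearer_of_mem_support_path hab.symm hy (hT.mem_support_path_comm hz)
  have hq : (Walk.cons hab (hT.path b y)).IsPath :=
    (hT.isPath_path b y).cons fun h => (hb a h).not_nearer (nearer_self hab)
  have hw := (hT.isPath_path x a).append_of_support_inter hq fun z hzx hzq => by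
    rw [Walk.support_cons, List.mem_cons] at hzq
    exact hzq.resolve_right fun hz =>
      (hT.nearer_of_mem_support_path hab hx hzx).not_nearer (hb z hz)
  have := congrArg Walk.length (hT.eq_path hw)
  rw [Walk.length_append, Walk.length_cons, length_path, length_path, length_path] at this
  omega

theorem mem_support_path_of_nearer (hT : G.IsTree) {a b x y : V} (hab : G.Adj a b)
    (hx : G.Nearer a b x) (hy : G.Nearer b a y) : a ∈ (hT.path x y).support := by
  apply hT.mem_support_path_of_dist_add_dist
  have h1 := hT.dist_eq_of_nearer hab hx hy
  have h2 : G.dist a y ≤ G.dist a b + G.dist b y := hT.connected.dist_triangle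
  have h3 : G.dist x y ≤ G.dist x a + G.dist a y := hT.connected.dist_triangle
  rw [dist_eq_one_iff_adj.2 hab] at h2
  omega

variable [Fintype V] [DecidableRel G.Adj]

/-- Only the last step of the path from `p` to `x` is a neighbour of `x` closer to `p`. -/
theorem exists_adj_dist_eq_add_one (hT : G.IsTree) {x : V} (S : Finset V)
    (hS : #S < G.degree x) : ∃ c, G.Adj x c ∧ ∀ p ∈ S, G.dist p c = G.dist p x + 1 := by
  rw [← card_neighborFinset_eq_degree] at hS
  obtain ⟨c, hc, hcS⟩ := exists_mem_notMem_of_card_lt_card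
    ((card_image_le (f := fun p => (hT.path p x).penultimate)).trans_lt hS)
  rw [mem_neighborFinset] at hc
  refine ⟨c, hc, fun p hp => ?_⟩
  refine (hT.dist_eq_dist_add_one_of_adj p hc).resolve_left fun h => hcS ?_
  exact mem_image.2 ⟨p, hp, (hT.eq_penultimate_of_dist_eq hc h).symm⟩

/-- A vertex on the side of `a` farthest from `b` is a leaf. -/
theorem exists_degree_eq_one_nearer (hT : G.IsTree) {a b : V} (hab : G.Adj a b) :
    ∃ x, G.degree x = 1 ∧ G.Nearer a b x := by
  classical
  have : Nontrivial V := ⟨⟨a, b, hab.ne⟩⟩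
  obtain ⟨x, hx, hmax⟩ := exists_max_image ({x | G.Nearer a b x} : Finset V) (G.dist b)
    ⟨a, by simpa using nearer_self hab⟩
  rw [mem_filter] at hx
  refine ⟨x, le_antisymm (not_lt.1 fun h => ?_)
    (hT.connected.preconnected.degree_pos_of_nontrivial x), hx.2⟩
  obtain ⟨c, hxc, hc⟩ := hT.exists_adj_dist_eq_add_one {b} (by rwa [card_singleton])
  have hcb := hc b (mem_singleton_self b)
  have hca : G.Nearer a b c := (hT.nearer_or hab c).resolve_right fun h' => by
    have : G.dist c a ≤ G.dist c x + G.dist x a := hT.connected.dist_triangle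
    rw [dist_eq_one_iff_adj.2 hxc.symm] at this
    unfold Nearer at h' hx
    have := G.dist_comm (u := c) (v := b)
    have := G.dist_comm (u := x) (v := b)
    omega
  have := hmax c (by simpa using hca)
  omega

/-- A vertex of degree at least `3` would have a branch avoiding both `u` and `b`, and that
branch contains a leaf. -/
theorem degree_eq_two_of_nearer (hT : G.IsTree) {a b u w : V} (hab : G.Adj a b)
    (hleaf : ∀ x, G.degree x = 1 → G.Nearer a b x → x = u) (hw : G.Nearer a b w)
    (hwu : w ≠ u) : G.degree w = 2 := by
  have : Nontrivial V := ⟨⟨a, b, hab.ne⟩⟩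
  have h1 := hT.connected.preconnected.degree_pos_of_nontrivial w
  have h2 : G.degree w ≠ 1 := fun h => hwu (hleaf w h hw)
  by_contra h3
  obtain ⟨c, hwc, hc⟩ := hT.exists_adj_dist_eq_add_one {u, b}
    (card_le_two.trans_lt (by omega : 2 < G.degree w))
  obtain ⟨x, hx, hxc⟩ := hT.exists_degree_eq_one_nearer hwc.symm
  have hbw : G.Nearer w c b := hc b (by simp)
  have hxab : G.Nearer a b x := by
    have e := hT.dist_eq_of_nearer hwc.symm hxc hbw
    have t1 : G.dist x a ≤ G.dist x w + G.dist w a := hT.connected.dist_triangle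
    have t2 : G.dist x w ≤ G.dist x c + G.dist c w := hT.connected.dist_triangle
    rw [dist_eq_one_iff_adj.2 hwc.symm] at t2
    refine (hT.nearer_or hab x).resolve_right fun h => ?_
    unfold Nearer at *
    have := G.dist_comm (u := w) (v := b)
    omega
  exact hxc.not_nearer (hleaf x hx hxab ▸ hc u (by simp))

end IsTree

/-- `s` lists `m` pairs `(s (i, false), s (i, true))` whose entries are exactly the elements
of `L`. -/
def IsPairCover (L : Finset V) {m : ℕ} (s : Fin m × Bool → V) : Prop := Set.range s = L

noncomputable def pairDist (G : SimpleGraph V) {m : ℕ} (s : Fin m × Bool → V) : ℕ :=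
  ∑ i, G.dist (s (i, false)) (s (i, true))

theorem exists_isPairCover {L : Finset V} (hL : L.Nonempty) {m : ℕ} (hm : #L ≤ 2 * m) :
    ∃ s : Fin m × Bool → V, IsPairCover L s := by
  have : Nonempty L := hL.to_subtype
  obtain ⟨e⟩ := Function.Embedding.nonempty_of_card_le (α := L) (β := Fin m × Bool)
    (by simpa [mul_comm] using hm)
  refine ⟨Subtype.val ∘ Function.invFun e, ?_⟩
  rw [IsPairCover, (Function.invFun_surjective e.injective).range_comp, Subtype.range_coe]

theorem exists_isPairCover_forall_pairDist_le [Fintype V] [DecidableEq V] {L : Finset V}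
    (hL : L.Nonempty) {m : ℕ} (hm : #L ≤ 2 * m) :
    ∃ s : Fin m × Bool → V, IsPairCover L s ∧
      ∀ t : Fin m × Bool → V, IsPairCover L t → pairDist G t ≤ pairDist G s :=
  Set.exists_max_image {s | IsPairCover L s} (pairDist G) (Set.toFinite _)
    (exists_isPairCover hL hm)

/-- Trading a pair on the side of `a` and a pair on the side of `b` for two pairs across the
edge `ab` lengthens the pairing. -/
theorem IsTree.pairDist_add_two_le_swap [DecidableEq V] (hT : G.IsTree) {a b : V}
    (hab : G.Adj a b) {m : ℕ} {s : Fin m × Bool → V} {i j : Fin m}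
    (hi : ∀ e, G.Nearer a b (s (i, e))) (hj : ∀ e, G.Nearer b a (s (j, e))) :
    pairDist G s + 2 ≤ pairDist G (s ∘ Equiv.swap (i, true) (j, false)) := by
  have hij : i ≠ j := fun h => (hi false).not_nearer (h ▸ hj false)
  have hsplit (F : Fin m → ℕ) : ∑ k, F k = ∑ k ∈ univ \ {i, j}, F k + (F i + F j) := by
    rw [← sum_pair hij, sum_sdiff (subset_univ _)]
  have hrest : ∑ k ∈ univ \ {i, j}, G.dist ((s ∘ Equiv.swap (i, true) (j, false)) (k, false))
      ((s ∘ Equiv.swap (i, true) (j, false)) (k, true)) =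
      ∑ k ∈ univ \ {i, j}, G.dist (s (k, false)) (s (k, true)) := by
    refine sum_congr rfl fun k hk => ?_
    simp only [mem_sdiff, mem_insert, mem_singleton, not_or] at hk
    simp [Equiv.swap_apply_def, hk.2.1, hk.2.2]
  rw [pairDist, pairDist, hsplit, hsplit (fun k => G.dist _ _), hrest]
  simp only [Function.comp_apply, Equiv.swap_apply_def, Prod.mk.injEq, hij, hij.symm]
  simp only [and_true, and_false, Bool.false_eq_true, Bool.true_eq_false, ite_false, ite_true]
  have ci := hT.dist_eq_of_nearer hab (hi false) (hj false)
  have cj := hT.dist_eq_of_nearer hab (hi true) (hj true)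
  have ti : G.dist (s (i, false)) (s (i, true)) ≤
      G.dist (s (i, false)) a + G.dist a (s (i, true)) := hT.connected.dist_triangle
  have tj : G.dist (s (j, false)) (s (j, true)) ≤
      G.dist (s (j, false)) b + G.dist b (s (j, true)) := hT.connected.dist_triangle
  have := G.dist_comm (u := a) (v := s (i, true))
  have := G.dist_comm (u := b) (v := s (j, false))
  omega

theorem IsPairCover.exists_mem_support_path [DecidableEq V] {L : Finset V} {m : ℕ}
    {s : Fin m × Bool → V} (hs : IsPairCover L s) (hT : G.IsTree)
    (hmax : ∀ t : Fin m × Bool → V, IsPairCover L t → pairDist G t ≤ pairDist G s)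
    {a b x y : V} (hab : G.Adj a b) (hx : x ∈ L) (hxa : G.Nearer a b x) (hy : y ∈ L)
    (hyb : G.Nearer b a y) : ∃ i, a ∈ (hT.path (s (i, false)) (s (i, true))).support := by
  by_contra! hno
  have hcross {z t : V} (hz : G.Nearer a b z) (ht : ¬ G.Nearer a b t) :
      a ∈ (hT.path z t).support :=
    hT.mem_support_path_of_nearer hab hz ((hT.nearer_or hab t).resolve_left ht)
  have hside (i : Fin m) (e e' : Bool) : G.Nearer a b (s (i, e)) → G.Nearer a b (s (i, e')) :=
    fun he => by_contra fun he' => by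
      cases e <;> cases e'
      · exact he' he
      · exact hno i (hcross he he')
      · exact hno i (hT.mem_support_path_comm (hcross he he'))
      · exact he' he
  obtain ⟨⟨i, e⟩, rfl⟩ : x ∈ Set.range s := hs ▸ hx
  obtain ⟨⟨j, e'⟩, rfl⟩ : y ∈ Set.range s := hs ▸ hy
  have hlt := hT.pairDist_add_two_le_swap hab (fun f => hside i e f hxa)
    (fun f => (hT.nearer_or hab _).resolve_left fun h => hyb.not_nearer (hside j f e' h))
  have := hmax (s ∘ Equiv.swap (i, true) (j, false))
    (by rw [IsPairCover, (Equiv.surjective _).range_comp]; exact hs)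
  omega

section Leaves

variable [Fintype V] [DecidableRel G.Adj]

def leafFinset (G : SimpleGraph V) [DecidableRel G.Adj] : Finset V := {v | G.degree v = 1}

theorem mem_leafFinset {v : V} : v ∈ G.leafFinset ↔ G.degree v = 1 := by
  simp [leafFinset]

variable [DecidableEq V]

def Walk.leaves {x y : V} (p : G.Walk x y) : Finset V := {v ∈ G.leafFinset | v ∈ p.support}

theorem Walk.IsPath.leaves_subset {x y : V} {p : G.Walk x y} (hp : p.IsPath) :
    p.leaves ⊆ {x, y} := fun z hz => by
  rw [Walk.leaves, mem_filter, mem_leafFinset] at hz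
  simpa using hp.eq_or_eq_of_degree_eq_one hz.2 hz.1

theorem Walk.IsPath.degree_eq_one_of_two_le_card_leaves {x y : V} {p : G.Walk x y}
    (hp : p.IsPath) (h : 2 ≤ #p.leaves) : x ≠ y ∧ G.degree x = 1 ∧ G.degree y = 1 := by
  have hle := card_le_card hp.leaves_subset
  have hxy : x ≠ y := by
    rintro rfl
    rw [pair_eq_singleton, card_singleton] at hle
    omega
  have heq := eq_of_subset_of_card_le hp.leaves_subset (by rwa [card_pair hxy])
  have hx : x ∈ p.leaves := heq ▸ mem_insert_self x {y}
  have hy : y ∈ p.leaves := heq ▸ mem_insert_of_mem (mem_singleton_self y)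
  rw [Walk.leaves, mem_filter, mem_leafFinset] at hx hy
  exact ⟨hxy, hx.1, hy.1⟩

theorem sum_card_leaves_eq {k : ℕ} {x y : Fin k → V} (p : ∀ i, G.Walk (x i) (y i)) :
    ∑ i, #(p i).leaves = ∑ v ∈ G.leafFinset, #{i | v ∈ (p i).support} := by
  simp only [Walk.leaves, card_filter]
  exact sum_comm

section Clean

variable {bad : V → Prop} {tag : V → Finset Bool}

theorem pathCost_eq_two_of_mem_leaves (hleafbad : ∀ v, G.degree v = 1 → bad v)
    (hclean : ∀ v, G.degree v = 1 → tag v = ∅) {x y v w : V} {p : G.Walk x y}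
    (hp : p.IsPath) (hw : w ∈ p.leaves) (hv : v ∈ p.support) (hbv : bad v) (hvw : v ≠ w) :
    pathCost bad tag p = 2 := by
  rw [Walk.leaves, mem_filter, mem_leafFinset] at hw
  refine pathCost_eq_two hv hw.2 hvw hbv (hleafbad w hw.1) ?_
  rcases hp.eq_or_eq_of_degree_eq_one hw.2 hw.1 with rfl | rfl
  · exact Or.inl (hclean _ hw.1)
  · exact Or.inr (hclean _ hw.1)

theorem card_leaves_le_pathCost (hleafbad : ∀ v, G.degree v = 1 → bad v)
    (hclean : ∀ v, G.degree v = 1 → tag v = ∅) {x y : V} {p : G.Walk x y} (hp : p.IsPath) :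
    #p.leaves ≤ pathCost bad tag p := by
  by_cases h : 2 ≤ #p.leaves
  · obtain ⟨hxy, hx, hy⟩ := hp.degree_eq_one_of_two_le_card_leaves h
    rw [pathCost_eq_two p.start_mem_support p.end_mem_support hxy (hleafbad x hx)
      (hleafbad y hy) (Or.inl (hclean x hx))]
    exact (card_le_card hp.leaves_subset).trans card_le_two
  · exact (by omega : #p.leaves ≤ 1).trans (one_le_pathCost p)

variable {k : ℕ} {x y : Fin k → V} {p : ∀ i, G.Walk (x i) (y i)}

theorem one_le_card_filter_mem_support (hleafbad : ∀ v, G.degree v = 1 → bad v)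
    (hcov : ∀ v, bad v → ∃ i, v ∈ (p i).support) {v : V} (hv : v ∈ G.leafFinset) :
    1 ≤ #{i | v ∈ (p i).support} := by
  obtain ⟨i, hi⟩ := hcov v (hleafbad v (mem_leafFinset.1 hv))
  exact card_pos.2 ⟨i, by simpa using hi⟩

theorem card_leafFinset_mem_lowerBounds_coverCosts (hleafbad : ∀ v, G.degree v = 1 → bad v)
    (hclean : ∀ v, G.degree v = 1 → tag v = ∅) :
    #G.leafFinset ∈ lowerBounds (CoverCosts G bad tag) := by
  rintro _ ⟨k, x, y, p, hp, hcov, rfl⟩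
  calc #G.leafFinset = ∑ _v ∈ G.leafFinset, 1 := card_eq_sum_ones _
    _ ≤ ∑ v ∈ G.leafFinset, #{i | v ∈ (p i).support} :=
      sum_le_sum fun _ hv => one_le_card_filter_mem_support hleafbad hcov hv
    _ = ∑ i, #(p i).leaves := (sum_card_leaves_eq p).symm
    _ ≤ ∑ i, pathCost bad tag (p i) :=
      sum_le_sum fun i _ => card_leaves_le_pathCost hleafbad hclean (hp i)

theorem card_leaves_eq_pathCost_of_sum_le (hleafbad : ∀ v, G.degree v = 1 → bad v)
    (hclean : ∀ v, G.degree v = 1 → tag v = ∅) (hp : ∀ i, (p i).IsPath)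
    (hcov : ∀ v, bad v → ∃ i, v ∈ (p i).support)
    (h : ∑ i, pathCost bad tag (p i) ≤ #G.leafFinset) :
    (∀ i, #(p i).leaves = pathCost bad tag (p i)) ∧ ∑ i, #(p i).leaves = #G.leafFinset ∧
      ∀ v ∈ G.leafFinset, #{i | v ∈ (p i).support} = 1 := by
  have hle : ∀ i ∈ univ, #(p i).leaves ≤ pathCost bad tag (p i) :=
    fun i _ => card_leaves_le_pathCost hleafbad hclean (hp i)
  have hpos : ∀ v ∈ G.leafFinset, 1 ≤ #{i | v ∈ (p i).support} :=
    fun v hv => one_le_card_filter_mem_support hleafbad hcov hv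
  have h1 := sum_le_sum hle
  have h2 := sum_le_sum hpos
  have h3 := sum_card_leaves_eq p
  rw [← card_eq_sum_ones] at h2
  refine ⟨fun i => (sum_eq_sum_iff_of_le hle).1 (by omega) i (mem_univ i), by omega,
    fun v hv => ((sum_eq_sum_iff_of_le hpos).1 ?_ v hv).symm⟩
  rw [← card_eq_sum_ones]
  omega

theorem card_leafFinset_add_one_mem_lowerBounds_coverCosts
    (hleafbad : ∀ v, G.degree v = 1 → bad v) (hclean : ∀ v, G.degree v = 1 → tag v = ∅)
    (hodd : Odd #G.leafFinset) (hlong : ∀ u, G.degree u = 1 → LongBranch G bad u) :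
    #G.leafFinset + 1 ∈ lowerBounds (CoverCosts G bad tag) := by
  rintro _ ⟨k, x, y, p, hp, hcov, rfl⟩
  by_contra! hlt
  obtain ⟨hcost, hsum, hone⟩ :=
    card_leaves_eq_pathCost_of_sum_le hleafbad hclean hp hcov (by omega)
  have hbound (i : Fin k) : 1 ≤ #(p i).leaves ∧ #(p i).leaves ≤ 2 :=
    hcost i ▸ ⟨one_le_pathCost _, pathCost_le_two _⟩
  obtain ⟨i, hi⟩ : ∃ i, #(p i).leaves = 1 := by
    by_contra! hne
    have h2 : ∀ i ∈ univ, #(p i).leaves = 2 := fun i _ => by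
      have := hbound i
      have := hne i
      omega
    rw [sum_congr rfl h2, sum_const, card_univ, Fintype.card_fin, smul_eq_mul] at hsum
    exact Nat.not_even_iff_odd.2 hodd ⟨k, by omega⟩
  obtain ⟨u, hu⟩ := card_eq_one.1 hi
  have hui : u ∈ (p i).leaves := hu ▸ mem_singleton_self u
  rw [Walk.leaves, mem_filter] at hui
  obtain ⟨v, q, -, hvu, hbv, hq⟩ := hlong u (mem_leafFinset.1 hui.1)
  have hv2 : G.degree v = 2 := (hq v q.end_mem_support).resolve_left hvu
  obtain ⟨j, hj⟩ := hcov v hbv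
  obtain ⟨w, hw⟩ : (p j).leaves.Nonempty := card_pos.1 (hbound j).1
  have hvw : v ≠ w := by
    rintro rfl
    rw [Walk.leaves, mem_filter, mem_leafFinset] at hw
    omega
  have hcj := pathCost_eq_two_of_mem_leaves hleafbad hclean (hp j) hw hj hbv hvw
  have hji : j ≠ i := by
    rintro rfl
    have := hcost j
    omega
  obtain ⟨-, hx, hy⟩ := (hp j).degree_eq_one_of_two_le_card_leaves (by rw [hcost j]; omega)
  have huj : u ∈ (p j).support :=
    (hp j).mem_support_of_chain (by omega) (by omega) q.reverse (by simpa using hq) hj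
  exact hji (card_le_one.1 (hone u hui.1).le j (by simpa using huj) i (by simpa using hui.2))

end Clean

end Leaves

namespace IsTree

variable {bad : V → Prop} {tag : V → Finset Bool}

theorem sum_pathCost_mem_coverCosts (hT : G.IsTree) {k : ℕ} (x y : Fin k → V)
    (hcov : ∀ v, bad v → ∃ i, v ∈ (hT.path (x i) (y i)).support) :
    ∑ i, pathCost bad tag (hT.path (x i) (y i)) ∈ CoverCosts G bad tag :=
  ⟨k, x, y, fun i => hT.path (x i) (y i), fun _ => hT.isPath_path _ _, hcov, rfl⟩

theorem sum_pathCost_path_le (hT : G.IsTree) {m : ℕ} (s : Fin m × Bool → V) :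
    ∑ i, pathCost bad tag (hT.path (s (i, false)) (s (i, true))) ≤ 2 * m :=
  (sum_le_sum fun _ _ => pathCost_le_two _).trans (by simp [mul_comm])

variable [Fintype V] [DecidableEq V] [DecidableRel G.Adj]

theorem exists_mem_coverCosts_le_two_mul [Nontrivial V] (hT : G.IsTree) {m : ℕ}
    (hm : #G.leafFinset ≤ 2 * m) : ∃ c ∈ CoverCosts G bad tag, c ≤ 2 * m := by
  have hadj (v : V) : ∃ n, G.Adj v n := (G.degree_pos_iff_exists_adj v).1
    (hT.connected.preconnected.degree_pos_of_nontrivial v)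
  have hleaf {v n : V} (h : G.Adj v n) : ∃ x ∈ G.leafFinset, G.Nearer v n x := by
    obtain ⟨x, hx, hxv⟩ := hT.exists_degree_eq_one_nearer h
    exact ⟨x, mem_leafFinset.2 hx, hxv⟩
  obtain ⟨v₀⟩ := (inferInstance : Nonempty V)
  obtain ⟨n₀, hn₀⟩ := hadj v₀
  obtain ⟨x₀, hx₀, -⟩ := hleaf hn₀
  obtain ⟨s, hs, hmax⟩ := exists_isPairCover_forall_pairDist_le (G := G) ⟨x₀, hx₀⟩ hm
  refine ⟨_, hT.sum_pathCost_mem_coverCosts _ _ fun v _ => ?_, hT.sum_pathCost_path_le s⟩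
  obtain ⟨n, hn⟩ := hadj v
  obtain ⟨x, hx, hxv⟩ := hleaf hn
  obtain ⟨y, hy, hyn⟩ := hleaf hn.symm
  exact hs.exists_mem_support_path hT hmax hn hx hxv hy hyn

/-- Every leaf other than `u` is paired, so on its own side of an edge `vc` leading away from
`u`, the vertex `v` sees no leaf but `u`. -/
theorem longBranch_of_forall_not_mem_support (hT : G.IsTree) {u v : V} {m : ℕ}
    {s : Fin m × Bool → V} (hs : IsPairCover (G.leafFinset.erase u) s)
    (hmax : ∀ t : Fin m × Bool → V, IsPairCover (G.leafFinset.erase u) t →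
      pairDist G t ≤ pairDist G s)
    (hbv : bad v) (hvu : v ≠ u)
    (hv : ∀ i, v ∉ (hT.path (s (i, false)) (s (i, true))).support) : LongBranch G bad u := by
  have : Nontrivial V := ⟨⟨u, v, hvu.symm⟩⟩
  have hv1 : G.degree v ≠ 1 := fun h => by
    obtain ⟨⟨i, e⟩, he⟩ : v ∈ Set.range s :=
      hs ▸ mem_erase.2 ⟨hvu, mem_leafFinset.2 h⟩
    apply hv i
    rw [← he]
    cases e
    · exact Walk.start_mem_support _
    · exact Walk.end_mem_support _
  have hv0 := hT.connected.preconnected.degree_pos_of_nontrivial v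
  obtain ⟨c, hvc, hc⟩ := hT.exists_adj_dist_eq_add_one (x := v) {u}
    (by rw [card_singleton]; omega)
  have hu_near : G.Nearer v c u := hc u (mem_singleton_self u)
  obtain ⟨y, hy, hyc⟩ := hT.exists_degree_eq_one_nearer hvc.symm
  have hleaf (x : V) (hx : G.degree x = 1) (hxv : G.Nearer v c x) : x = u := by
    by_contra hxu
    obtain ⟨i, hi⟩ := hs.exists_mem_support_path hT hmax hvc
      (mem_erase.2 ⟨hxu, mem_leafFinset.2 hx⟩) hxv
      (mem_erase.2 ⟨fun h => (h ▸ hyc).not_nearer hu_near, mem_leafFinset.2 hy⟩) hyc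
    exact hv i hi
  refine ⟨v, hT.path u v, hT.isPath_path u v, hvu, hbv, fun w hw => ?_⟩
  refine or_iff_not_imp_left.2 fun hwu => hT.degree_eq_two_of_nearer hvc hleaf ?_ hwu
  exact hT.nearer_of_mem_support_path hvc hu_near hw

theorem exists_mem_coverCosts_le_of_not_longBranch (hT : G.IsTree) {r : ℕ}
    (hcard : #G.leafFinset = 2 * r + 1) (hr : 0 < r) {u : V} (hu : G.degree u = 1)
    (hnl : ¬ LongBranch G bad u) : ∃ c ∈ CoverCosts G bad tag, c ≤ 2 * r + 1 := by
  have hcard' : #(G.leafFinset.erase u) = 2 * r := by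
    rw [card_erase_of_mem (mem_leafFinset.2 hu), hcard]
    rfl
  obtain ⟨s, hs, hmax⟩ :=
    exists_isPairCover_forall_pairDist_le (G := G) (card_pos.1 (by omega)) hcard'.le
  refine ⟨_, hT.sum_pathCost_mem_coverCosts (Fin.cons u fun i => s (i, false))
    (Fin.cons u fun i => s (i, true)) fun v hbv => ?_, ?_⟩
  · by_cases hvu : v = u
    · exact ⟨0, hvu ▸ Walk.start_mem_support _⟩
    · by_contra! hno
      exact hnl (hT.longBranch_of_forall_not_mem_support hs hmax hbv hvu
        fun i => hno i.succ)
  · rw [Fin.sum_univ_succ]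
    change pathCost bad tag (hT.path u u) + ∑ i : Fin r,
        pathCost bad tag (hT.path (s (i, false)) (s (i, true))) ≤ _
    rw [hT.path_self, pathCost_nil]
    have := hT.sum_pathCost_path_le (bad := bad) (tag := tag) s
    omega

end IsTree

end SimpleGraph

theorem isLeast_of_mem_of_le {α : Type*} [PartialOrder α] {S : Set α} {a b : α} (ha : a ∈ S)
    (hab : a ≤ b) (hb : b ∈ lowerBounds S) : IsLeast S b := by
  obtain rfl := le_antisymm hab (hb ha)
  exact ⟨ha, hb⟩

open SimpleGraph

/-- Let `T` be a tagged component tree with `ℓ ≥ 2` leaves, all of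
whose leaves are clean (empty tag set). Then the minimum cost of a cover is `ℓ + 1` if
`ℓ` is odd and every leaf-branch of `T` is long (the *fortress* case), and `ℓ`
otherwise. -/
theorem optimal_cover_cost_clean_leaves {V : Type} [Fintype V] [DecidableEq V]
    (G : SimpleGraph V) [DecidableRel G.Adj] (hT : G.IsTree)
    (bad : V → Prop) (tag : V → Finset Bool)
    (hleafbad : ∀ v, G.degree v = 1 → bad v)
    (hclean : ∀ v, G.degree v = 1 → tag v = ∅)
    (ℓ : ℕ) (hℓ : (Finset.univ.filter fun v => G.degree v = 1).card = ℓ) (h2 : 2 ≤ ℓ) :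
    ((Odd ℓ ∧ ∀ u, G.degree u = 1 → LongBranch G bad u) →
        IsLeast (CoverCosts G bad tag) (ℓ + 1)) ∧
    (¬ (Odd ℓ ∧ ∀ u, G.degree u = 1 → LongBranch G bad u) →
        IsLeast (CoverCosts G bad tag) ℓ) := by
  obtain rfl : #G.leafFinset = ℓ := hℓ
  have : Nontrivial V := Fintype.one_lt_card_iff_nontrivial.1 (h2.trans (card_le_univ _))
  have hlb := card_leafFinset_mem_lowerBounds_coverCosts hleafbad hclean
  refine ⟨fun ⟨hodd, hlong⟩ => ?_, fun hnf => ?_⟩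
  · obtain ⟨r, hr⟩ := hodd
    obtain ⟨c, hc, hle⟩ := hT.exists_mem_coverCosts_le_two_mul (m := r + 1) (by omega)
    exact isLeast_of_mem_of_le hc (by omega)
      (card_leafFinset_add_one_mem_lowerBounds_coverCosts hleafbad hclean ⟨r, hr⟩ hlong)
  · rcases Nat.even_or_odd' #G.leafFinset with ⟨r, hr | hr⟩
    · obtain ⟨c, hc, hle⟩ := hT.exists_mem_coverCosts_le_two_mul (m := r) (by omega)
      exact isLeast_of_mem_of_le hc (by omega) hlb
    · obtain ⟨u, hu, hnl⟩ : ∃ u, G.degree u = 1 ∧ ¬ LongBranch G bad u := by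
        by_contra! h
        exact hnf ⟨⟨r, hr⟩, h⟩
      obtain ⟨c, hc, hle⟩ := hT.exists_mem_coverCosts_le_of_not_longBranch hr (by omega) hu hnl
      exact isLeast_of_mem_of_le hc (by omega) hlb
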